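/- arXiv:math/9907145 — 3 statements merged into one kernel-verified Lean document; each statement's English description precedes it below -/
import Mathlib

section
/- A point I ∈ Ω satisfies g(σ^k(I)) ∈ ∂K for all k ≥ 0 if and only if f_{i_1}∘...∘f_{i_k}(K) ∩ ∂K ≠ ∅ for all k > 0. That is, A = A' where A = {I : g(σ^k(I)) ∈ ∂K for all k ≥ 0} and A' = {I : f_{I_k}(K) ∩ ∂K ≠ ∅ for all k}. -/
open Filter Topology

/-- `seqComp f I k = f (I 0) ∘ f (I 1) ∘ ⋯ ∘ f (I (k-1))`. -/
def seqComp {X : Type*} {n : ℕ} (f : Fin n → X → X) (I : ℕ → Fin n) : ℕ → X → X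
  | 0 => id
  | (k + 1) => seqComp f I k ∘ f (I k)

lemma seqComp_dist {l n : ℕ} (f : Fin n → EuclideanSpace ℝ (Fin l) → EuclideanSpace ℝ (Fin l))
    (c : Fin n → ℝ) (hsim : ∀ i x y, dist (f i x) (f i y) = c i * dist x y)
    (I : ℕ → Fin n) (k : ℕ) (x y : EuclideanSpace ℝ (Fin l)) :
    dist (seqComp f I k x) (seqComp f I k y)
      = (∏ j ∈ Finset.range k, c (I j)) * dist x y := by
  induction k generalizing x y with
  | zero => simp [seqComp]
  | succ k ih =>
      simp only [seqComp, Function.comp_apply]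
      rw [ih, hsim, Finset.prod_range_succ]; ring

lemma shift_iterate {n : ℕ} (I : ℕ → Fin n) (k m : ℕ) :
    (fun (J : ℕ → Fin n) m => J (m + 1))^[k] I m = I (m + k) := by
  induction k generalizing I with
  | zero => rfl
  | succ k ih =>
      rw [Function.iterate_succ_apply, ih]
      show I (m + k + 1) = I (m + (k + 1))
      congr 1

lemma seqComp_add {X : Type*} {n : ℕ} (f : Fin n → X → X) (I : ℕ → Fin n) (k m : ℕ) :
    seqComp f I (k + m)
      = seqComp f I k ∘ seqComp f ((fun (J : ℕ → Fin n) m => J (m + 1))^[k] I) m := by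
  induction m with
  | zero => simp [seqComp]
  | succ m ih =>
      have : k + (m + 1) = (k + m) + 1 := by ring
      rw [this]
      show seqComp f I (k + m) ∘ f (I (k + m)) = _
      rw [ih]
      have h2 : (fun (J : ℕ → Fin n) m => J (m + 1))^[k] I m = I (k + m) := by
        rw [shift_iterate]; congr 1; omega
      funext x
      simp [seqComp, Function.comp, h2]

/-- `A = A'`: a sequence `I` satisfies `g(σ^k I) ∈ ∂K` for all `k ≥ 0` if and only
if `f_{i_1}∘⋯∘f_{i_k}(K) ∩ ∂K ≠ ∅` for all `k > 0`. -/
theorem A_eq_Aprime (l n : ℕ)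
    (f : Fin n → EuclideanSpace ℝ (Fin l) → EuclideanSpace ℝ (Fin l))
    (c : Fin n → ℝ) (hc : ∀ i, 0 < c i ∧ c i < 1)
    (hsim : ∀ i x y, dist (f i x) (f i y) = c i * dist x y)
    (K : Set (EuclideanSpace ℝ (Fin l))) (hKne : K.Nonempty) (hKc : IsCompact K)
    (hK : K = ⋃ i, f i '' K) (hKint : (interior K).Nonempty)
    (g : (ℕ → Fin n) → EuclideanSpace ℝ (Fin l))
    (hg : ∀ I x, Tendsto (fun k => seqComp f I k x) atTop (𝓝 (g I))) :
    {I : ℕ → Fin n | ∀ k : ℕ, g ((fun (J : ℕ → Fin n) m => J (m + 1))^[k] I) ∈ frontier K}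
      = {I : ℕ → Fin n | ∀ k, 0 < k → (seqComp f I k '' K ∩ frontier K).Nonempty} := by
  have hfK : ∀ i, f i '' K ⊆ K := by
    intro i
    conv_rhs => rw [hK]
    exact Set.subset_iUnion (fun i => f i '' K) i
  have hsc_mem : ∀ (J : ℕ → Fin n) k x, x ∈ K → seqComp f J k x ∈ K := by
    intro J k
    induction k with
    | zero => intro x hx; exact hx
    | succ k ih => intro x hx; exact ih _ (hfK _ ⟨x, hx, rfl⟩)
  have hcontf : ∀ i, Continuous (f i) := by
    intro i
    refine LipschitzWith.continuous (K := (c i).toNNReal)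
      (LipschitzWith.of_dist_le_mul fun x y => ?_)
    rw [hsim, Real.coe_toNNReal _ (hc i).1.le]
  have hcont : ∀ (J : ℕ → Fin n) k, Continuous (seqComp f J k) := by
    intro J k
    induction k with
    | zero => exact continuous_id
    | succ k ih => exact ih.comp (hcontf (J k))
  have hgK : ∀ J, g J ∈ K := by
    intro J
    obtain ⟨x0, hx0⟩ := hKne
    exact hKc.isClosed.mem_of_tendsto (hg J x0)
      (Filter.Eventually.of_forall fun k => hsc_mem J k x0 hx0)
  have hgcomp : ∀ (J : ℕ → Fin n) k,
      g J = seqComp f J k (g ((fun (J : ℕ → Fin n) m => J (m + 1))^[k] J)) := by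
    intro J k
    set J' := (fun (J : ℕ → Fin n) m => J (m + 1))^[k] J with hJ'
    obtain ⟨x0, hx0⟩ := hKne
    have h1 : Tendsto (fun m => seqComp f J (k + m) x0) atTop
        (𝓝 (seqComp f J k (g J'))) := by
      have h0 := ((hcont J k).tendsto (g J')).comp (hg J' x0)
      refine Tendsto.congr (fun m => ?_) h0
      rw [seqComp_add]
      rfl
    have h2 : Tendsto (fun m => seqComp f J (k + m) x0) atTop (𝓝 (g J)) := by
      have := (hg J x0).comp (tendsto_add_atTop_nat k)
      simpa [Function.comp_def, Nat.add_comm] using this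
    exact tendsto_nhds_unique h2 h1
  -- each f i is an open map
  have hopen : ∀ i, IsOpenMap (f i) := by
    intro i
    have hc0 : (0:ℝ) < c i := (hc i).1
    have hiso : Isometry (fun x => (c i)⁻¹ • f i x) := by
      refine Isometry.of_dist_eq fun x y => ?_
      rw [dist_smul₀, hsim, norm_inv, Real.norm_of_nonneg hc0.le]
      field_simp
    set A := hiso.affineIsometryOfStrictConvexSpace with hA
    have hAinj : Function.Injective A.toAffineMap.linear := by
      have := A.linearIsometry.injective
      exact this
    have hAsurj : Function.Surjective (fun x => (c i)⁻¹ • f i x) := by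
      have hl : Function.Surjective A.toAffineMap.linear :=
        LinearMap.injective_iff_surjective.mp hAinj
      have := A.toAffineMap.linear_surjective_iff.mp hl
      exact this
    have hsurj : Function.Surjective (f i) := by
      intro y
      obtain ⟨x, hx⟩ := hAsurj ((c i)⁻¹ • y)
      exact ⟨x, smul_right_injective _ (inv_ne_zero hc0.ne') hx⟩
    have hinj : Function.Injective (f i) := by
      intro x y hxy
      have : dist x y = 0 := by
        have h := hsim i x y
        rw [hxy, dist_self] at h
        nlinarith [dist_nonneg (x := x) (y := y)]
      exact dist_eq_zero.mp this
    let e := Equiv.ofBijective (f i) ⟨hinj, hsurj⟩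
    have hconts : Continuous e.symm := by
      refine LipschitzWith.continuous (K := (c i)⁻¹.toNNReal)
        (LipschitzWith.of_dist_le_mul fun a b => ?_)
      have h1 : dist a b = c i * dist (e.symm a) (e.symm b) := by
        conv_lhs => rw [← e.apply_symm_apply a, ← e.apply_symm_apply b]
        exact hsim i _ _
      rw [Real.coe_toNNReal _ (inv_nonneg.mpr hc0.le), h1]
      rw [inv_mul_cancel_left₀ hc0.ne']
    exact (Homeomorph.mk e (hcontf i) hconts).isOpenMap
  have hopenComp : ∀ (J : ℕ → Fin n) k, IsOpenMap (seqComp f J k) := by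
    intro J k
    induction k with
    | zero => exact IsOpenMap.id
    | succ k ih => exact ih.comp (hopen (J k))
  -- pulling back frontier membership
  have hfr : ∀ (J : ℕ → Fin n) k w, w ∈ K → seqComp f J k w ∈ frontier K →
      w ∈ frontier K := by
    intro J k w hwK hwfr
    rw [hKc.isClosed.frontier_eq] at hwfr ⊢
    refine ⟨hwK, fun hint => hwfr.2 ?_⟩
    have hsub : seqComp f J k '' interior K ⊆ interior K :=
      interior_maximal (fun z ⟨y, hy, hz⟩ => hz ▸ hsc_mem J k y (interior_subset hy))
        ((hopenComp J k) _ isOpen_interior)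
    exact hsub ⟨w, hint, rfl⟩
  ext I
  haveI : Nonempty (Fin n) := ⟨I 0⟩
  simp only [Set.mem_setOf_eq]
  constructor
  · intro h k hk
    refine ⟨g I, ⟨g ((fun (J : ℕ → Fin n) m => J (m + 1))^[k] I),
      hKc.isClosed.frontier_subset (h k), (hgcomp I k).symm⟩, ?_⟩
    simpa using h 0
  · intro h k
    set J := (fun (J : ℕ → Fin n) m => J (m + 1))^[k] I with hJ
    have hstep : ∀ m : ℕ, ∃ y, y ∈ K ∧ seqComp f J (m + 1) y ∈ frontier K := by
      intro m
      obtain ⟨z, ⟨y, hyK, hz⟩, hzfr⟩ := h (k + (m + 1)) (by omega)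
      rw [seqComp_add] at hz
      have hwK : seqComp f J (m + 1) y ∈ K := hsc_mem J (m + 1) y hyK
      have hz' : seqComp f I k (seqComp f J (m + 1) y) = z := hz
      exact ⟨y, hyK, hfr I k _ hwK (hz' ▸ hzfr)⟩
    choose y hyK hyfr using hstep
    -- the common contraction ratio
    set C : ℝ := Finset.univ.sup' Finset.univ_nonempty c with hC
    have hC1 : C < 1 := (Finset.sup'_lt_iff _).mpr fun i _ => (hc i).2
    have hC0 : 0 ≤ C := le_trans (hc (I 0)).1.le (Finset.le_sup' c (Finset.mem_univ _))
    have hCi : ∀ i, c i ≤ C := fun i => Finset.le_sup' c (Finset.mem_univ i)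
    set D : ℝ := Metric.diam K with hD
    have htend : Tendsto (fun m => seqComp f J (m + 1) (y m)) atTop (𝓝 (g J)) := by
      rw [tendsto_iff_dist_tendsto_zero]
      have hub : ∀ m, dist (seqComp f J (m + 1) (y m)) (g J)
          ≤ C ^ (m + 1) * D + dist (seqComp f J (m + 1) (g J)) (g J) := by
        intro m
        refine le_trans (dist_triangle _ (seqComp f J (m + 1) (g J)) _) ?_
        gcongr
        rw [seqComp_dist f c hsim]
        have h1 : (∏ j ∈ Finset.range (m + 1), c (J j)) ≤ C ^ (m + 1) := by
          generalize m + 1 = p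
          induction p with
          | zero => simp
          | succ p ih =>
              rw [Finset.prod_range_succ, pow_succ]
              exact mul_le_mul ih (hCi _) (hc _).1.le (pow_nonneg hC0 _)
        have h2 : dist (y m) (g J) ≤ D :=
          Metric.dist_le_diam_of_mem hKc.isBounded (hyK m) (hgK J)
        have h3 : (0:ℝ) ≤ ∏ j ∈ Finset.range (m + 1), c (J j) :=
          Finset.prod_nonneg fun j _ => (hc (J j)).1.le
        exact mul_le_mul h1 h2 dist_nonneg (pow_nonneg hC0 _)
      have hlim : Tendsto (fun m => C ^ (m + 1) * D
          + dist (seqComp f J (m + 1) (g J)) (g J)) atTop (𝓝 0) := by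
        have l1 : Tendsto (fun m : ℕ => C ^ (m + 1) * D) atTop (𝓝 0) := by
          have := (tendsto_pow_atTop_nhds_zero_of_lt_one hC0 hC1).comp
            (tendsto_add_atTop_nat 1)
          simpa using this.mul_const D
        have l2 : Tendsto (fun m => dist (seqComp f J (m + 1) (g J)) (g J)) atTop
            (𝓝 0) := by
          have h0 : Tendsto (fun m => seqComp f J (m + 1) (g J)) atTop (𝓝 (g J)) :=
            (hg J (g J)).comp (tendsto_add_atTop_nat 1)
          exact tendsto_iff_dist_tendsto_zero.mp h0
        simpa using l1.add l2
      exact squeeze_zero (fun m => dist_nonneg) hub hlim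
    exact isClosed_frontier.mem_of_tendsto htend (Filter.Eventually.of_forall hyfr)
end

section
/- Let {f_1,...,f_n} be an IFS of contracting similitudes on R^l with ratios c_i satisfying Σ_{i=1}^n c_i^l = 1. If the attractor K has nonempty interior, then F satisfies the open set condition with U = int K; in particular f_i(int K) ∩ f_j(int K) = ∅ for i ≠ j. -/
open MeasureTheory Module Set
open scoped RealInnerProductSpace ENNReal Pointwise

/-- An isometric embedding of a real inner product space into itself fixing `0` is linear. -/
lemma exists_linearIsometry_of_isometry_map_zero {E : Type*} [NormedAddCommGroup E]
    [InnerProductSpace ℝ E] (g : E → E) (h0 : g 0 = 0)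
    (hg : ∀ x y, ‖g x - g y‖ = ‖x - y‖) :
    ∃ L : E →ₗᵢ[ℝ] E, ∀ x, g x = L x := by
  have hnorm : ∀ x, ‖g x‖ = ‖x‖ := fun x => by simpa [h0] using hg x 0
  have hinner : ∀ x y, ⟪g x, g y⟫ = ⟪x, y⟫ := by
    intro x y
    have h1 := real_inner_eq_norm_mul_self_add_norm_mul_self_sub_norm_sub_mul_self_div_two
      (g x) (g y)
    rw [hg, hnorm, hnorm] at h1
    rw [h1, ← real_inner_eq_norm_mul_self_add_norm_mul_self_sub_norm_sub_mul_self_div_two]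
  have hadd : ∀ x y, g (x + y) = g x + g y := by
    intro x y
    have h : ⟪g (x + y) - (g x + g y), g (x + y) - (g x + g y)⟫ = 0 := by
      simp only [inner_sub_left, inner_sub_right, inner_add_left, inner_add_right, hinner,
        real_inner_comm y x]
      ring
    have h2 := inner_self_eq_zero (𝕜 := ℝ).mp h
    rw [sub_eq_zero] at h2
    exact h2
  have hsmul : ∀ (r : ℝ) (x : E), g (r • x) = r • g x := by
    intro r x
    have h : ⟪g (r • x) - r • g x, g (r • x) - r • g x⟫ = 0 := by
      simp only [inner_sub_left, inner_sub_right, real_inner_smul_left, real_inner_smul_right,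
        hinner]
      ring
    have h2 := inner_self_eq_zero (𝕜 := ℝ).mp h
    rw [sub_eq_zero] at h2
    exact h2
  refine ⟨LinearMap.isometryOfInner
    { toFun := g, map_add' := hadd, map_smul' := hsmul } hinner, fun x => rfl⟩

/-- If an IFS of contracting similitudes on `ℝ^l` with ratios `c i` satisfies
`∑ c i ^ l = 1` and its attractor `K` has nonempty interior, then the open set
condition holds with `U = int K`; in particular the sets `f i '' (int K)` are
pairwise disjoint. -/
theorem osc_of_nonempty_interior (l n : ℕ)
    (f : Fin n → EuclideanSpace ℝ (Fin l) → EuclideanSpace ℝ (Fin l))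
    (c : Fin n → ℝ) (hc : ∀ i, 0 < c i ∧ c i < 1)
    (hsim : ∀ i x y, dist (f i x) (f i y) = c i * dist x y)
    (hsum : ∑ i, c i ^ l = 1)
    (K : Set (EuclideanSpace ℝ (Fin l))) (hKne : K.Nonempty) (hKc : IsCompact K)
    (hK : K = ⋃ i, f i '' K) (hKint : (interior K).Nonempty) :
    (⋃ i, f i '' interior K) ⊆ interior K ∧
      Pairwise fun i j => Disjoint (f i '' interior K) (f j '' interior K) := by
  classical
  -- Each `f i` is an invertible affine similarity.
  have key : ∀ i, ∃ L : EuclideanSpace ℝ (Fin l) ≃ₗᵢ[ℝ] EuclideanSpace ℝ (Fin l), ∀ x, f i x = c i • L x + f i 0 := by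
    intro i
    obtain ⟨hc1, _⟩ := hc i
    set g : EuclideanSpace ℝ (Fin l) → EuclideanSpace ℝ (Fin l) := fun x => (c i)⁻¹ • (f i x - f i 0) with hgdef
    have h0 : g 0 = 0 := by simp [hgdef]
    have hgiso : ∀ x y, ‖g x - g y‖ = ‖x - y‖ := by
      intro x y
      have hxy : g x - g y = (c i)⁻¹ • (f i x - f i y) := by
        rw [hgdef]; simp only [← smul_sub]; congr 1; abel
      have hd := hsim i x y
      rw [dist_eq_norm] at hd
      rw [hxy, norm_smul, hd, Real.norm_eq_abs, abs_of_pos (inv_pos.mpr hc1), ← mul_assoc,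
        inv_mul_cancel₀ hc1.ne', one_mul, ← dist_eq_norm, dist_eq_norm]
    obtain ⟨L0, hL0⟩ := exists_linearIsometry_of_isometry_map_zero g h0 hgiso
    refine ⟨L0.toLinearIsometryEquiv rfl, fun x => ?_⟩
    have hfx : f i x = c i • g x + f i 0 := by
      rw [hgdef]; simp [smul_smul, mul_inv_cancel₀ hc1.ne']
    rw [hfx, hL0 x, LinearIsometry.coe_toLinearIsometryEquiv]
  choose L hL using key
  have hrepr : ∀ i, f i = (fun y => y + f i 0) ∘ (fun y => c i • y) ∘ (L i) :=
    fun i => funext fun x => hL i x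
  have hfopen : ∀ i, IsOpenMap (f i) := by
    intro i
    rw [hrepr i]
    exact (Homeomorph.addRight (f i 0)).isOpenMap.comp
      ((isOpenMap_smul₀ (hc i).1.ne').comp (L i).toHomeomorph.isOpenMap)
  have hfcont : ∀ i, Continuous (f i) := by
    intro i
    rw [hrepr i]
    exact (continuous_id.add continuous_const).comp
      ((continuous_const_smul _).comp (L i).continuous)
  have hsubK : ∀ i, f i '' K ⊆ K := by
    intro i
    exact (Set.subset_iUnion (fun j => f j '' K) i).trans hK.symm.subset
  -- Part 1: images of the interior are contained in the interior.
  have hpart1 : (⋃ i, f i '' interior K) ⊆ interior K := by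
    refine Set.iUnion_subset fun i => ?_
    refine (hfopen i _ isOpen_interior).subset_interior_iff.mpr ?_
    exact (Set.image_mono interior_subset).trans (hsubK i)
  refine ⟨hpart1, ?_⟩
  -- Measure-theoretic part.
  set μ : Measure (EuclideanSpace ℝ (Fin l)) := volume with hμ
  have hKm : MeasurableSet K := hKc.isClosed.measurableSet
  have hμKfin : μ K ≠ ⊤ := hKc.measure_lt_top.ne
  have hμKpos : 0 < μ K := μ.measure_pos_of_nonempty_interior hKint
  have himg : ∀ i, μ (f i '' K) = ENNReal.ofReal (c i ^ l) * μ K := by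
    intro i
    have h1 : f i '' K = (fun y => y + f i 0) '' ((fun y => c i • y) '' ((L i) '' K)) := by
      simp only [Set.image_image]
      exact Set.image_congr fun x _ => hL i x
    have hLK : μ ((L i) '' K) = μ K := by
      rw [Set.image_eq_preimage_of_inverse (L i).symm_apply_apply (L i).apply_symm_apply]
      exact ((L i).symm.measurePreserving).measure_preimage hKm.nullMeasurableSet
    rw [h1, Set.image_add_right, measure_preimage_add_right, Set.image_smul,
      Measure.addHaar_smul, hLK, finrank_euclideanSpace_fin, abs_of_pos (pow_pos (hc i).1 l)]
  have hsumμ : ∑ i, μ (f i '' K) = μ K := by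
    calc ∑ i, μ (f i '' K) = (∑ i, ENNReal.ofReal (c i ^ l)) * μ K := by
          rw [Finset.sum_mul]; exact Finset.sum_congr rfl fun i _ => himg i
      _ = μ K := by
          rw [← ENNReal.ofReal_sum_of_nonneg fun i _ => pow_nonneg (hc i).1.le l, hsum,
            ENNReal.ofReal_one, one_mul]
  have hnull : ∀ i j, i ≠ j → μ (f i '' K ∩ f j '' K) = 0 := by
    intro i j hij
    set A := fun k => f k '' K with hA
    have hAm : ∀ k, MeasurableSet (A k) :=
      fun k => ((hKc.image (hfcont k)).isClosed).measurableSet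
    have hAfin : ∀ k, μ (A k) ≠ ⊤ := fun k => ((measure_mono (hsubK k)).trans_lt
      hKc.measure_lt_top).ne
    set T := ∑ k ∈ ({i, j}ᶜ : Finset (Fin n)), μ (A k) with hT
    have hTfin : T ≠ ⊤ := by
      rw [hT]
      exact (ENNReal.sum_lt_top.mpr fun k _ => (hAfin k).lt_top).ne
    have hcover : μ K ≤ μ (A i ∪ A j) + T := by
      conv_lhs => rw [hK]
      have hsub : (⋃ k, A k) ⊆ (A i ∪ A j) ∪ ⋃ k ∈ ({i, j}ᶜ : Finset (Fin n)), A k := by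
        refine Set.iUnion_subset fun k => ?_
        by_cases hk : k ∈ ({i, j} : Finset (Fin n))
        · rcases Finset.mem_insert.mp hk with h | h
          · subst h; exact (Set.subset_union_left).trans Set.subset_union_left
          · rw [Finset.mem_singleton] at h; subst h
            exact (Set.subset_union_right).trans Set.subset_union_left
        · exact (Set.subset_biUnion_of_mem (u := A) (Finset.mem_compl.mpr hk)).trans
            Set.subset_union_right
      refine (measure_mono hsub).trans ?_
      refine (measure_union_le _ _).trans ?_
      exact add_le_add le_rfl (measure_biUnion_finset_le _ _)
    have hsplit : μ (A i) + μ (A j) + T = μ K := by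
      rw [hT, ← Finset.sum_pair (f := fun k => μ (A k)) hij, Finset.sum_add_sum_compl]
      exact hsumμ
    have hunion : μ (A i ∪ A j) + μ (A i ∩ A j) = μ (A i) + μ (A j) :=
      measure_union_add_inter _ (hAm j)
    have hfinal : (μ (A i ∪ A j) + T) + μ (A i ∩ A j) ≤ (μ (A i ∪ A j) + T) + 0 := by
      rw [add_zero]
      calc (μ (A i ∪ A j) + T) + μ (A i ∩ A j) = (μ (A i ∪ A j) + μ (A i ∩ A j)) + T := by ring
        _ = μ (A i) + μ (A j) + T := by rw [hunion]
        _ = μ K := hsplit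
        _ ≤ μ (A i ∪ A j) + T := hcover
    have hfin : μ (A i ∪ A j) + T ≠ ⊤ :=
      ENNReal.add_ne_top.mpr ⟨((measure_mono (Set.union_subset (hsubK i) (hsubK j))).trans_lt
        hKc.measure_lt_top).ne, hTfin⟩
    exact le_antisymm ((ENNReal.add_le_add_iff_left hfin).mp hfinal) zero_le
  -- Part 2: disjointness.
  intro i j hij
  rcases (f i '' interior K ∩ f j '' interior K).eq_empty_or_nonempty with h | h
  · exact Set.disjoint_iff_inter_eq_empty.mpr h
  · exfalso
    have hopen : IsOpen (f i '' interior K ∩ f j '' interior K) :=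
      (hfopen i _ isOpen_interior).inter (hfopen j _ isOpen_interior)
    have hpos : 0 < μ (f i '' interior K ∩ f j '' interior K) := hopen.measure_pos μ h
    have hzero : μ (f i '' interior K ∩ f j '' interior K) = 0 :=
      measure_mono_null (Set.inter_subset_inter (Set.image_mono interior_subset)
        (Set.image_mono interior_subset)) (hnull i j hij)
    exact hpos.ne' hzero
end

section
/- For the Lévy dragon iteration: for each k ≥ 0, F^k(T_0) is a union of exactly 2^k triangles of the k-th subdivision triangulation T_k, each of diameter (1/√2)^k, and F^{k+1}(T_0) is obtained from F^k(T_0) by replacing each triangle T by the triangles T^L and T^R. -/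
/-- The first Lévy similitude, `f₁(x,y) = ((x-y)/2, (x+y)/2)`, with the plane `ℝ²`
identified with `ℂ`. -/
noncomputable def levyF1 (z : ℂ) : ℂ :=
  (((z.re - z.im) / 2 : ℝ) : ℂ) + (((z.re + z.im) / 2 : ℝ) : ℂ) * Complex.I

/-- The second Lévy similitude, `f₂(x,y) = ((x+y+1)/2, (y-x+1)/2)`. -/
noncomputable def levyF2 (z : ℂ) : ℂ :=
  (((z.re + z.im + 1) / 2 : ℝ) : ℂ) + (((z.im - z.re + 1) / 2 : ℝ) : ℂ) * Complex.I

/-- The Hutchinson map `F(A) = f₁(A) ∪ f₂(A)` of the Lévy IFS. -/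
noncomputable def levyF (A : Set ℂ) : Set ℂ := levyF1 '' A ∪ levyF2 '' A

/-- The top vertex (apex) of the right isosceles triangle with left vertex `a` and
right vertex `b` (hypotenuse from `a` to `b`, apex to the left of the directed
segment `a → b`). -/
noncomputable def apex (a b : ℂ) : ℂ := (a + b) / 2 + Complex.I * (b - a) / 2

/-- The closed right isosceles triangle with left vertex `a`, right vertex `b`
(its hypotenuse), and top vertex `apex a b`. -/
noncomputable def tri (a b : ℂ) : Set ℂ := convexHull ℝ {a, b, apex a b}

/-- The initial triangle `T₀ = tri 0 1`, with vertices `(0,0)`, `(1/2,1/2)`, `(1,0)`. -/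
noncomputable def levyT0 : Set ℂ := tri 0 1

/-- Membership in the `k`-th subdivision triangulation `𝒯ₖ` of the plane into right
isosceles triangles: the hypotenuse runs from a point of the lattice `ρ^k ℤ[i]` in
one of the four directions `ρ^k i^j`, where `ρ = (1+i)/2`. -/
def isTk (k : ℕ) (T : Set ℂ) : Prop :=
  ∃ (m n : ℤ) (j : Fin 4),
    T = tri (((1 + Complex.I) / 2) ^ k * ((m : ℂ) + (n : ℂ) * Complex.I))
        (((1 + Complex.I) / 2) ^ k * ((m : ℂ) + (n : ℂ) * Complex.I) +
          ((1 + Complex.I) / 2) ^ k * Complex.I ^ (j : ℕ))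

noncomputable def affC (α β : ℂ) : ℂ →ᵃ[ℝ] ℂ where
  toFun z := α * z + β
  linear := LinearMap.mulLeft ℝ α
  map_vadd' p v := by simp [LinearMap.mulLeft_apply]; ring

lemma apex_aff (α β a b : ℂ) : α * apex a b + β = apex (α * a + β) (α * b + β) := by
  unfold apex; ring

lemma tri_aff (α β a b : ℂ) : (fun z => α * z + β) '' tri a b = tri (α * a + β) (α * b + β) := by
  have h : (fun z => α * z + β) = (affC α β : ℂ → ℂ) := rfl
  rw [h, tri, AffineMap.image_convexHull]
  rw [Set.image_insert_eq, Set.image_insert_eq, Set.image_singleton]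
  show convexHull ℝ {α * a + β, α * b + β, α * apex a b + β} = _
  rw [apex_aff]
  rfl

lemma abs_rho : ‖(1 + Complex.I) / 2‖ = Real.sqrt 2 / 2 := by
  rw [norm_div, Complex.norm_two]
  congr 1
  rw [Complex.norm_def, Complex.normSq_apply]
  norm_num

lemma diam_tri (a b : ℂ) : Metric.diam (tri a b) = dist a b := by
  rw [tri, convexHull_diam, Metric.diam_triple]
  have h1 : dist a (apex a b) = dist a b * (Real.sqrt 2 / 2) := by
    rw [Complex.dist_eq, Complex.dist_eq,
      show a - apex a b = (a - b) * ((1 + Complex.I) / 2) by unfold apex; ring,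
      norm_mul, abs_rho]
  have h2 : dist b (apex a b) = dist a b * (Real.sqrt 2 / 2) := by
    rw [Complex.dist_eq, Complex.dist_eq,
      show b - apex a b = (a - b) * (-((1 - Complex.I) / 2)) by unfold apex; ring,
      norm_mul, norm_neg]
    congr 1
    rw [norm_div, Complex.norm_two]
    congr 1
    rw [Complex.norm_def, Complex.normSq_apply]
    norm_num
  have hle : Real.sqrt 2 / 2 ≤ 1 := by
    rw [div_le_one (by norm_num)]
    nlinarith [Real.sq_sqrt (by norm_num : (2:ℝ) ≥ 0), Real.sqrt_nonneg 2]
  rw [h1, h2]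
  have hd : dist a b * (Real.sqrt 2 / 2) ≤ dist a b := by
    nlinarith [dist_nonneg (x := a) (y := b)]
  rw [max_eq_left hd, max_eq_left hd]

lemma levyF1_eq : levyF1 = fun z => ((1 + Complex.I) / 2) * z := by
  funext z
  apply Complex.ext <;>
    simp [levyF1, Complex.div_re, Complex.div_im, Complex.normSq_apply] <;> ring

lemma levyF2_eq : levyF2 = fun z => ((1 - Complex.I) / 2) * z + (1 + Complex.I) / 2 := by
  funext z
  apply Complex.ext <;>
    simp [levyF2, Complex.div_re, Complex.div_im, Complex.normSq_apply] <;> ring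

lemma iUnion_prod_fin2 {α : Type*} (u : α × Fin 2 → Set ℂ) :
    (⋃ p : α × Fin 2, u p) = ⋃ j, (u (j, 0) ∪ u (j, 1)) := by
  ext z
  simp only [Set.mem_iUnion, Prod.exists, Set.mem_union]
  constructor
  · rintro ⟨a, b, h⟩
    exact ⟨a, by fin_cases b <;> [left; right] <;> exact h⟩
  · rintro ⟨a, h | h⟩
    exacts [⟨a, 0, h⟩, ⟨a, 1, h⟩]

lemma levy_key : ∀ k : ℕ, ∃ c : Fin (2 ^ k) → ℂ × ℂ,
    (∀ j, ∃ (m n : ℤ) (i4 : Fin 4),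
      (c j).2 = ((1 + Complex.I) / 2) ^ k * ((m : ℂ) + (n : ℂ) * Complex.I) ∧
      (c j).1 = ((1 + Complex.I) / 2) ^ k * Complex.I ^ (i4 : ℕ)) ∧
    (∀ S : Set ℂ, levyF^[k] S = ⋃ j, (fun z => (c j).1 * z + (c j).2) '' S) := by
  intro k
  induction k with
  | zero =>
    refine ⟨fun _ => (1, 0), fun j => ⟨0, 0, 0, by simp, by simp⟩, fun S => ?_⟩
    simp [Set.iUnion_const]
  | succ k ih =>
    obtain ⟨c, hlat, hit⟩ := ih
    set ρ : ℂ := (1 + Complex.I) / 2 with hρ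
    set σ : ℂ := (1 - Complex.I) / 2 with hσ
    let d : Fin (2 ^ k) × Fin 2 → ℂ × ℂ := fun p =>
      if p.2 = 0 then (ρ * (c p.1).1, (c p.1).2)
      else (σ * (c p.1).1, ρ * (c p.1).1 + (c p.1).2)
    let e : Fin (2 ^ k) × Fin 2 ≃ Fin (2 ^ (k + 1)) :=
      finProdFinEquiv.trans (finCongr (by rw [pow_succ]))
    refine ⟨d ∘ e.symm, ?_, ?_⟩
    · intro j'
      obtain ⟨⟨j, t⟩, rfl⟩ := e.surjective j'
      obtain ⟨m, n, i4, hb, ha⟩ := hlat j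
      have hde : ∀ p, (d ∘ e.symm) (e p) = d p := fun p => by simp
      rw [hde]
      fin_cases t
      · refine ⟨m + n, n - m, i4, ?_, ?_⟩
        · show (c j).2 = _
          rw [hb, hρ]
          push_cast
          linear_combination (-(((1 + Complex.I) / 2) ^ k) * ((n : ℂ) - (m : ℂ)) / 2) *
            Complex.I_sq
        · show ρ * (c j).1 = _
          rw [ha, hρ]; ring
      · fin_cases i4
        · have ha' : (c j).1 = ρ ^ k * Complex.I ^ (0 : ℕ) := ha
          refine ⟨m + n + 1, n - m, 3, ?_, ?_⟩
          · show ρ * (c j).1 + (c j).2 = _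
            rw [hb, ha', hρ]
            push_cast
            linear_combination (-(((1 + Complex.I) / 2) ^ k) * ((n : ℂ) - (m : ℂ)) / 2) *
              Complex.I_sq
          · show σ * (c j).1 = ρ ^ (k + 1) * Complex.I ^ ((3 : Fin 4) : ℕ)
            rw [show ((3 : Fin 4) : ℕ) = 3 from rfl, ha', hρ, hσ]
            linear_combination ((((1 + Complex.I) / 2) ^ k) *
              (1 - Complex.I ^ 2 - Complex.I) / 2) * Complex.I_sq
        · have ha' : (c j).1 = ρ ^ k * Complex.I ^ (1 : ℕ) := ha
          refine ⟨m + n, n - m + 1, 0, ?_, ?_⟩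
          · show ρ * (c j).1 + (c j).2 = _
            rw [hb, ha', hρ]
            push_cast
            linear_combination ((((1 + Complex.I) / 2) ^ k) * ((m : ℂ) - (n : ℂ)) / 2) *
              Complex.I_sq
          · show σ * (c j).1 = ρ ^ (k + 1) * Complex.I ^ ((0 : Fin 4) : ℕ)
            rw [show ((0 : Fin 4) : ℕ) = 0 from rfl, ha', hρ, hσ]
            linear_combination (-(((1 + Complex.I) / 2) ^ k) / 2) * Complex.I_sq
        · have ha' : (c j).1 = ρ ^ k * Complex.I ^ (2 : ℕ) := ha
          refine ⟨m + n - 1, n - m, 1, ?_, ?_⟩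
          · show ρ * (c j).1 + (c j).2 = _
            rw [hb, ha', hρ]
            push_cast
            linear_combination ((((1 + Complex.I) / 2) ^ k) *
              (((m : ℂ) - (n : ℂ) + 1) + Complex.I) / 2) * Complex.I_sq
          · show σ * (c j).1 = ρ ^ (k + 1) * Complex.I ^ ((1 : Fin 4) : ℕ)
            rw [show ((1 : Fin 4) : ℕ) = 1 from rfl, ha', hρ, hσ]
            linear_combination (-(((1 + Complex.I) / 2) ^ k) * Complex.I / 2) * Complex.I_sq
        · have ha' : (c j).1 = ρ ^ k * Complex.I ^ (3 : ℕ) := ha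
          refine ⟨m + n, n - m - 1, 2, ?_, ?_⟩
          · show ρ * (c j).1 + (c j).2 = _
            rw [hb, ha', hρ]
            push_cast
            linear_combination ((((1 + Complex.I) / 2) ^ k) *
              (Complex.I ^ 2 + ((m : ℂ) - (n : ℂ)) + Complex.I) / 2) * Complex.I_sq
          · show σ * (c j).1 = ρ ^ (k + 1) * Complex.I ^ ((2 : Fin 4) : ℕ)
            rw [show ((2 : Fin 4) : ℕ) = 2 from rfl, ha', hρ, hσ]
            linear_combination (-(((1 + Complex.I) / 2) ^ k) * Complex.I ^ 2 / 2) *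
              Complex.I_sq
    · intro S
      rw [Function.iterate_succ_apply, hit]
      have h1 : levyF S = (fun z => ρ * z) '' S ∪ (fun z => σ * z + ρ) '' S := by
        rw [levyF, levyF1_eq, levyF2_eq]
      calc (⋃ j, (fun z => (c j).1 * z + (c j).2) '' levyF S)
          = ⋃ j, ((fun z => (d (j, 0)).1 * z + (d (j, 0)).2) '' S ∪
                  (fun z => (d (j, 1)).1 * z + (d (j, 1)).2) '' S) := by
            refine Set.iUnion_congr fun j => ?_
            rw [h1, Set.image_union, Set.image_image, Set.image_image]
            congr 1
            · apply Set.image_congr'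
              intro x
              show (c j).1 * (ρ * x) + (c j).2 = ρ * (c j).1 * x + (c j).2
              ring
            · apply Set.image_congr'
              intro x
              show (c j).1 * (σ * x + ρ) + (c j).2 = σ * (c j).1 * x + (ρ * (c j).1 + (c j).2)
              ring
        _ = ⋃ p : Fin (2 ^ k) × Fin 2, (fun z => (d p).1 * z + (d p).2) '' S :=
            (iUnion_prod_fin2 (fun p => (fun z => (d p).1 * z + (d p).2) '' S)).symm
        _ = ⋃ j', (fun z => ((d ∘ e.symm) j').1 * z + ((d ∘ e.symm) j').2) '' S := by
            exact (e.symm.surjective.iUnion_comp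
              (g := fun p => (fun z => (d p).1 * z + (d p).2) '' S)).symm


lemma apex_pair (α β : ℂ) : apex β (α + β) = (1 + Complex.I) / 2 * α + β := by
  unfold apex; ring

lemma levyF_T0 : levyF levyT0 = tri 0 ((1 + Complex.I) / 2) ∪ tri ((1 + Complex.I) / 2) 1 := by
  rw [levyF, levyT0, levyF1_eq, levyF2_eq]
  congr 1
  · rw [show (fun z => (1 + Complex.I) / 2 * z) = fun z => (1 + Complex.I) / 2 * z + 0 by
      funext z; ring, tri_aff]
    norm_num
  · rw [tri_aff, mul_zero, zero_add, mul_one,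
      show (1 - Complex.I) / 2 + (1 + Complex.I) / 2 = 1 by ring]

/-- For each `k`, `F^k(T₀)` is a union of `2^k` triangles of `𝒯ₖ`, each of diameter
`(1/√2)^k`, and `F^{k+1}(T₀)` is obtained from `F^k(T₀)` by replacing each triangle
`T = tri a b` by `T^L = tri a (apex a b)` and `T^R = tri (apex a b) b`. -/
theorem levy_iterates_structure :
    ∀ k : ℕ, ∃ v : Fin (2 ^ k) → ℂ × ℂ,
      (∀ j, isTk k (tri (v j).1 (v j).2)) ∧
      levyF^[k] levyT0 = ⋃ j, tri (v j).1 (v j).2 ∧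
      (∀ j, Metric.diam (tri (v j).1 (v j).2) = (1 / Real.sqrt 2) ^ k) ∧
      levyF^[k + 1] levyT0 =
        ⋃ j, (tri (v j).1 (apex (v j).1 (v j).2) ∪ tri (apex (v j).1 (v j).2) (v j).2) := by
  intro k
  obtain ⟨c, hlat, hF⟩ := levy_key k
  refine ⟨fun j => ((c j).2, (c j).1 + (c j).2), ?_, ?_, ?_, ?_⟩
  · intro j
    obtain ⟨m, n, i4, hb, ha⟩ := hlat j
    refine ⟨m, n, i4, ?_⟩
    show tri (c j).2 ((c j).1 + (c j).2) = _
    have h2 : (c j).1 + (c j).2 =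
        ((1 + Complex.I) / 2) ^ k * ((m : ℂ) + (n : ℂ) * Complex.I) +
          ((1 + Complex.I) / 2) ^ k * Complex.I ^ (i4 : ℕ) := by
      rw [hb, ha]; ring
    rw [h2, hb]
  · rw [hF levyT0, levyT0]
    refine Set.iUnion_congr fun j => ?_
    show (fun z => (c j).1 * z + (c j).2) '' tri 0 1 = _
    rw [tri_aff, mul_zero, zero_add, mul_one]
  · intro j
    obtain ⟨m, n, i4, hb, ha⟩ := hlat j
    show Metric.diam (tri (c j).2 ((c j).1 + (c j).2)) = _
    rw [diam_tri, Complex.dist_eq,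
      show (c j).2 - ((c j).1 + (c j).2) = -(c j).1 by ring, norm_neg, ha,
      norm_mul, norm_pow, abs_rho, norm_pow, Complex.norm_I, one_pow, mul_one]
    have h2 : Real.sqrt 2 / 2 = 1 / Real.sqrt 2 := by
      rw [eq_div_iff (Real.sqrt_ne_zero'.mpr (by norm_num)), div_mul_eq_mul_div,
        Real.mul_self_sqrt (by norm_num)]
      norm_num
    rw [h2]
  · rw [Function.iterate_succ_apply, levyF_T0, hF]
    refine Set.iUnion_congr fun j => ?_
    show (fun z => (c j).1 * z + (c j).2) ''
        (tri 0 ((1 + Complex.I) / 2) ∪ tri ((1 + Complex.I) / 2) 1) = _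
    rw [Set.image_union, tri_aff, tri_aff, mul_zero, zero_add, mul_one]
    show tri (c j).2 _ ∪ tri _ ((c j).1 + (c j).2) = _
    rw [apex_pair, mul_comm ((c j).1)]
end
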